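/- arXiv:1511.08073 — 4 statements merged into one kernel-verified Lean document; each statement's English description precedes it below -/
import Mathlib

section
/- Suppose there exists a Hadamard matrix of order $4t+4i$ where $0 \le i < t$. Then there exists a binary code of length $4t$ with $8t + 8i$ codewords and minimum Hamming distance at least $2t - 2i$. -/
/-- A Hadamard matrix: ±1 entries and H Hᵀ = n I. -/
def IsHadamard {n : ℕ} (H : Matrix (Fin n) (Fin n) ℤ) : Prop :=
  (∀ i j, H i j = 1 ∨ H i j = -1) ∧
    H * H.transpose = (n : ℤ) • (1 : Matrix (Fin n) (Fin n) ℤ)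

/-- If there is a Hadamard matrix of order 4t+4i with i < t, then there is a binary code
of length 4t with 8t+8i codewords and minimum distance at least 2t-2i. -/
theorem code_from_hadamard (t i : ℕ) (hi : i < t)
    (hH : ∃ H : Matrix (Fin (4 * t + 4 * i)) (Fin (4 * t + 4 * i)) ℤ, IsHadamard H) :
    ∃ C : Finset (Fin (4 * t) → Bool), C.card = 8 * t + 8 * i ∧
      ∀ c₁ ∈ C, ∀ c₂ ∈ C, c₁ ≠ c₂ → 2 * t - 2 * i ≤ hammingDist c₁ c₂ := by
  obtain ⟨H, hpm, horth⟩ := hH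
  have hmn : 4 * t ≤ 4 * t + 4 * i := by omega
  -- cardinality of the "low columns" filter
  have hlow : (Finset.univ.filter fun j : Fin (4 * t + 4 * i) => (j : ℕ) < 4 * t).card
      = 4 * t := by
    have himg : (Finset.univ.filter fun j : Fin (4 * t + 4 * i) => (j : ℕ) < 4 * t)
        = (Finset.univ : Finset (Fin (4 * t))).image (Fin.castLE hmn) := by
      ext j
      simp only [Finset.mem_filter, Finset.mem_univ, true_and, Finset.mem_image]
      constructor
      · intro h; exact ⟨⟨(j : ℕ), h⟩, by ext; simp⟩
      · rintro ⟨x, rfl⟩; exact x.isLt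
    rw [himg, Finset.card_image_of_injective _ (Fin.castLE_injective hmn)]
    simp
  have hhigh : (Finset.univ.filter fun j : Fin (4 * t + 4 * i) => ¬ (j : ℕ) < 4 * t).card
      = 4 * i := by
    have := Finset.card_filter_add_card_filter_not
      (s := (Finset.univ : Finset (Fin (4 * t + 4 * i))))
      (p := fun j => (j : ℕ) < 4 * t)
    simp only [Finset.card_univ, Fintype.card_fin] at this
    omega
  -- restriction lemma
  have restrict : ∀ (P : Fin (4 * t + 4 * i) → Prop) (_ : DecidablePred P),
      (Finset.univ.filter P).card ≤
        (Finset.univ.filter fun j : Fin (4 * t) => P (Fin.castLE hmn j)).card + 4 * i := by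
    intro P _
    have hsub : (Finset.univ.filter P) ⊆
        ((Finset.univ.filter fun j : Fin (4 * t) => P (Fin.castLE hmn j)).image
          (Fin.castLE hmn))
        ∪ (Finset.univ.filter fun j : Fin (4 * t + 4 * i) => ¬ (j : ℕ) < 4 * t) := by
      intro j hj
      simp only [Finset.mem_filter, Finset.mem_univ, true_and] at hj
      simp only [Finset.mem_union, Finset.mem_image, Finset.mem_filter, Finset.mem_univ,
        true_and]
      by_cases h : (j : ℕ) < 4 * t
      · left
        refine ⟨⟨(j : ℕ), h⟩, ?_, by ext; simp⟩
        have hc : Fin.castLE hmn (⟨(j : ℕ), h⟩ : Fin (4 * t)) = j := by ext; simp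
        rw [hc]; exact hj
      · right; exact h
    calc (Finset.univ.filter P).card ≤ _ := Finset.card_le_card hsub
      _ ≤ _ + _ := Finset.card_union_le _ _
      _ ≤ _ := by
          rw [Finset.card_image_of_injective _ (Fin.castLE_injective hmn), hhigh]
  -- orthogonality counting
  have count : ∀ k l : Fin (4 * t + 4 * i), k ≠ l →
      (Finset.univ.filter fun j => H k j = H l j).card = 2 * t + 2 * i ∧
      (Finset.univ.filter fun j => ¬ H k j = H l j).card = 2 * t + 2 * i := by
    intro k l hkl
    have horthkl : ∑ j, H k j * H l j = 0 := by
      have h0 := congrFun (congrFun horth k) l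
      rw [Matrix.mul_apply] at h0
      simp only [Matrix.transpose_apply] at h0
      rw [h0, Matrix.smul_apply, Matrix.one_apply_ne hkl, smul_zero]
    have h1 : ∑ j ∈ (Finset.univ.filter fun j => H k j = H l j), H k j * H l j
        = ((Finset.univ.filter fun j => H k j = H l j).card : ℤ) := by
      rw [Finset.sum_congr rfl (fun j hj => ?_), Finset.sum_const, nsmul_eq_mul, mul_one]
      simp only [Finset.mem_filter, Finset.mem_univ, true_and] at hj
      rcases hpm k j with h | h <;> rcases hpm l j with h' | h'
      · rw [h, h']; norm_num
      · exact absurd hj (by rw [h, h']; norm_num)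
      · exact absurd hj (by rw [h, h']; norm_num)
      · rw [h, h']; norm_num
    have h2 : ∑ j ∈ (Finset.univ.filter fun j => ¬ H k j = H l j), H k j * H l j
        = -((Finset.univ.filter fun j => ¬ H k j = H l j).card : ℤ) := by
      rw [Finset.sum_congr rfl (fun j hj => ?_), Finset.sum_const, nsmul_eq_mul, mul_neg_one]
      simp only [Finset.mem_filter, Finset.mem_univ, true_and] at hj
      rcases hpm k j with h | h <;> rcases hpm l j with h' | h'
      · exact absurd (by rw [h, h']) hj
      · rw [h, h']; norm_num
      · rw [h, h']; norm_num
      · exact absurd (by rw [h, h']) hj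
    have hsplit : (0 : ℤ) = ((Finset.univ.filter fun j => H k j = H l j).card : ℤ)
        - ((Finset.univ.filter fun j => ¬ H k j = H l j).card : ℤ) := by
      rw [← horthkl,
        ← Finset.sum_filter_add_sum_filter_not Finset.univ (fun j => H k j = H l j)
          (fun j => H k j * H l j), h1, h2]
      ring
    have htot := Finset.card_filter_add_card_filter_not
      (s := (Finset.univ : Finset (Fin (4 * t + 4 * i)))) (p := fun j => H k j = H l j)
    simp only [Finset.card_univ, Fintype.card_fin] at htot
    have hcast : ((Finset.univ.filter fun j => H k j = H l j).card : ℤ)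
        = ((Finset.univ.filter fun j => ¬ H k j = H l j).card : ℤ) := by linarith
    have := Nat.cast_injective (R := ℤ) hcast
    omega
  -- key distance lemma
  have key : ∀ p q : Fin (4 * t + 4 * i) × Bool, p ≠ q →
      2 * t - 2 * i ≤ hammingDist
        (fun j => xor (decide (H p.1 (Fin.castLE hmn j) = 1)) p.2)
        (fun j => xor (decide (H q.1 (Fin.castLE hmn j) = 1)) q.2) := by
    rintro ⟨k, b⟩ ⟨l, b'⟩ hpq
    dsimp only
    by_cases hkl : k = l
    · subst hkl
      have hb : b ≠ b' := fun h => hpq (by rw [h])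
      have hall : hammingDist
          (fun j => xor (decide (H k (Fin.castLE hmn j) = 1)) b)
          (fun j => xor (decide (H k (Fin.castLE hmn j) = 1)) b') = 4 * t := by
        unfold hammingDist
        rw [show (Finset.univ.filter fun j : Fin (4 * t) =>
            xor (decide (H k (Fin.castLE hmn j) = 1)) b
            ≠ xor (decide (H k (Fin.castLE hmn j) = 1)) b') = Finset.univ from ?_]
        · simp
        · ext j
          simp only [Finset.mem_filter, Finset.mem_univ, true_and, iff_true]
          cases b <;> cases b' <;> first | exact absurd rfl hb | simp
      omega
    · obtain ⟨hA, hD⟩ := count k l hkl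
      by_cases hb : b = b'
      · subst hb
        have heq : hammingDist
            (fun j => xor (decide (H k (Fin.castLE hmn j) = 1)) b)
            (fun j => xor (decide (H l (Fin.castLE hmn j) = 1)) b)
            = (Finset.univ.filter fun j : Fin (4 * t) =>
                ¬ H k (Fin.castLE hmn j) = H l (Fin.castLE hmn j)).card := by
          unfold hammingDist
          congr 1
          ext j
          simp only [Finset.mem_filter, Finset.mem_univ, true_and]
          rcases hpm k (Fin.castLE hmn j) with h | h <;>
            rcases hpm l (Fin.castLE hmn j) with h' | h' <;>
            rw [h, h'] <;> cases b <;> decide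
        have := restrict (fun j => ¬ H k j = H l j) (by infer_instance)
        omega
      · have heq : hammingDist
            (fun j => xor (decide (H k (Fin.castLE hmn j) = 1)) b)
            (fun j => xor (decide (H l (Fin.castLE hmn j) = 1)) b')
            = (Finset.univ.filter fun j : Fin (4 * t) =>
                H k (Fin.castLE hmn j) = H l (Fin.castLE hmn j)).card := by
          unfold hammingDist
          congr 1
          ext j
          simp only [Finset.mem_filter, Finset.mem_univ, true_and]
          rcases hpm k (Fin.castLE hmn j) with h | h <;>
            rcases hpm l (Fin.castLE hmn j) with h' | h' <;>
            rw [h, h'] <;> cases b <;> cases b' <;> first | exact absurd rfl hb | decide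
        have := restrict (fun j => H k j = H l j) (by infer_instance)
        omega
  have hinj : Function.Injective (fun p : Fin (4 * t + 4 * i) × Bool =>
      (fun j => xor (decide (H p.1 (Fin.castLE hmn j) = 1)) p.2 : Fin (4 * t) → Bool)) := by
    intro p q hpq
    by_contra hne
    have hk := key p q hne
    simp only at hpq
    rw [hpq, hammingDist_self] at hk
    omega
  refine ⟨Finset.univ.image (fun p : Fin (4 * t + 4 * i) × Bool =>
      (fun j => xor (decide (H p.1 (Fin.castLE hmn j) = 1)) p.2 : Fin (4 * t) → Bool)),
      ?_, ?_⟩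
  · rw [Finset.card_image_of_injective _ hinj]
    simp only [Finset.card_univ, Fintype.card_prod, Fintype.card_fin, Fintype.card_bool]
    omega
  · intro c₁ hc₁ c₂ hc₂ hne
    simp only [Finset.mem_image, Finset.mem_univ, true_and] at hc₁ hc₂
    obtain ⟨p, rfl⟩ := hc₁
    obtain ⟨q, rfl⟩ := hc₂
    exact key p q (fun h => hne (by rw [h]))
end

section
/- Let $H$ be a Hadamard matrix of order $n$ with $n \ge 3$. Then $4$ divides $n$. -/
/-- The order of a Hadamard matrix of order at least 3 is divisible by 4. -/
theorem hadamard_order_div_four (n : ℕ) (hn : 3 ≤ n)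
    (H : Matrix (Fin n) (Fin n) ℤ) (hH : IsHadamard H) : 4 ∣ n := by
  obtain ⟨hpm, horth⟩ := hH
  have key : ∀ i j : Fin n, ∑ c, H i c * H j c = if i = j then (n : ℤ) else 0 := by
    intro i j
    have := congrFun (congrFun horth i) j
    simp only [Matrix.mul_apply, Matrix.transpose_apply, Matrix.smul_apply,
      Matrix.one_apply, smul_eq_mul] at this
    rw [this]
    split <;> simp
  set i : Fin n := ⟨0, by omega⟩
  set j : Fin n := ⟨1, by omega⟩
  set k : Fin n := ⟨2, by omega⟩
  have hij : i ≠ j := by simp [i, j, Fin.ext_iff]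
  have hik : i ≠ k := by simp [i, k, Fin.ext_iff]
  have hjk : j ≠ k := by simp [j, k, Fin.ext_iff]
  have hsum : ∑ c, (H i c + H j c) * (H i c + H k c) = (n : ℤ) := by
    have expand : ∀ c, (H i c + H j c) * (H i c + H k c)
        = H i c * H i c + H i c * H k c + H j c * H i c + H j c * H k c := by
      intro c; ring
    rw [Finset.sum_congr rfl fun c _ => expand c]
    rw [Finset.sum_add_distrib, Finset.sum_add_distrib, Finset.sum_add_distrib]
    have h1 := key i i
    have h2 := key i k
    have h3 := key j i
    have h4 := key j k
    simp only [if_pos rfl, if_neg hik, if_neg hjk, if_neg (Ne.symm hij)] at h1 h2 h3 h4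
    rw [h1, h2, h3, h4]; simp
  have hdvd : (4 : ℤ) ∣ (n : ℤ) := by
    rw [← hsum]
    apply Finset.dvd_sum
    intro c _
    rcases hpm i c with h1 | h1 <;> rcases hpm j c with h2 | h2 <;>
      rcases hpm k c with h3 | h3 <;> rw [h1, h2, h3] <;> decide
  exact_mod_cast hdvd
end

section
/- Let $q \equiv 3 \pmod 4$ be a prime power. Then there exists a Hadamard matrix of order $q + 1$. -/
open Finset
open scoped Matrix

theorem isHadamard_reindex {ι : Type*} [Fintype ι] [DecidableEq ι] {n : ℕ} (e : ι ≃ Fin n)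
    {H : Matrix ι ι ℤ} (hpm : ∀ i j, H i j = 1 ∨ H i j = -1)
    (horth : H * Hᵀ = (n : ℤ) • 1) : IsHadamard (Matrix.reindex e e H) := by
  refine ⟨fun i j => hpm _ _, ?_⟩
  rw [Matrix.reindex_apply, Matrix.transpose_submatrix, Matrix.submatrix_mul_equiv, horth,
    Matrix.submatrix_smul, Pi.smul_apply, Pi.smul_apply, Matrix.submatrix_one_equiv]

section Paley

theorem ringChar_ne_two_of_card_mod_four_eq_three {F : Type*} [Field F] [Fintype F]
    (h4 : Fintype.card F % 4 = 3) : ringChar F ≠ 2 := fun h => by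
  have := FiniteField.even_card_of_char_two h
  omega

variable {F : Type*} [Field F] [Fintype F] [DecidableEq F]

theorem sum_quadraticChar_sq : ∑ x : F, quadraticChar F x ^ 2 = Fintype.card F - 1 := by
  have h := MulChar.sum_one_eq_card_units (R := F) (R' := ℤ)
  rw [← (quadraticChar_isQuadratic F).sq_eq_one, Fintype.card_units] at h
  simp only [MulChar.pow_apply' _ two_ne_zero] at h
  rw [h, Nat.cast_sub Fintype.card_pos, Nat.cast_one]

theorem sum_quadraticChar_mul_quadraticChar_sub_one (hF : ringChar F ≠ 2) :
    ∑ x : F, quadraticChar F x * quadraticChar F (x - 1) = -1 := by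
  -- `χ⁻¹ = χ`, so the sum is `χ (-1) • jacobiSum χ χ⁻¹ = χ (-1) • -χ (-1)`.
  have hJ := jacobiSum_nontrivial_inv (quadraticChar_ne_one hF)
  rw [(quadraticChar_isQuadratic F).inv, jacobiSum] at hJ
  calc ∑ x : F, quadraticChar F x * quadraticChar F (x - 1)
      = quadraticChar F (-1) * ∑ x : F, quadraticChar F x * quadraticChar F (1 - x) := by
        rw [mul_sum]
        refine sum_congr rfl fun x _ => ?_
        rw [← neg_sub, neg_eq_neg_one_mul (1 - x), map_mul]
        ring
    _ = -1 := by
        rw [hJ, mul_neg, ← sq, quadraticChar_sq_one (neg_ne_zero.mpr one_ne_zero)]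

theorem sum_quadraticChar_sub_mul_quadraticChar_sub (hF : ringChar F ≠ 2) {a b : F}
    (hab : a ≠ b) :
    ∑ c : F, quadraticChar F (a - c) * quadraticChar F (b - c) = -1 := by
  have hd : a - b ≠ 0 := sub_ne_zero.mpr hab
  have hbij : Function.Bijective fun x : F => a - (a - b) * x :=
    (Equiv.subLeft a).bijective.comp (mulLeft_bijective₀ _ hd)
  rw [← Fintype.sum_bijective _ hbij _ _ fun _ => rfl,
    ← sum_quadraticChar_mul_quadraticChar_sub_one hF]
  refine sum_congr rfl fun x _ => ?_
  rw [sub_sub_cancel, show b - (a - (a - b) * x) = (a - b) * (x - 1) by ring, map_mul, map_mul]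
  linear_combination (quadraticChar F x * quadraticChar F (x - 1)) *
    quadraticChar_sq_one hd

variable (F) in
def jacobsthal : Matrix F F ℤ := Matrix.of fun a b => quadraticChar F (a - b)

theorem sum_jacobsthal_row (hF : ringChar F ≠ 2) (a : F) : ∑ b, jacobsthal F a b = 0 := by
  rw [← quadraticChar_sum_zero hF]
  exact Fintype.sum_equiv (Equiv.subLeft a) _ _ fun _ => rfl

theorem jacobsthal_mul_transpose (hF : ringChar F ≠ 2) :
    jacobsthal F * (jacobsthal F)ᵀ = (Fintype.card F : ℤ) • 1 - Matrix.of fun _ _ => 1 := by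
  ext a b
  simp only [Matrix.mul_apply, Matrix.transpose_apply, jacobsthal, Matrix.of_apply,
    Matrix.sub_apply, Matrix.smul_apply, Matrix.one_apply, smul_eq_mul]
  by_cases hab : a = b
  · subst hab
    simp only [← sq, if_true, mul_one]
    exact (Fintype.sum_equiv (Equiv.subLeft a) (fun x => quadraticChar F (a - x) ^ 2)
      (fun x => quadraticChar F x ^ 2) fun _ => rfl).trans sum_quadraticChar_sq
  · simp only [hab, if_false, mul_zero, zero_sub]
    exact sum_quadraticChar_sub_mul_quadraticChar_sub hF hab

theorem jacobsthal_transpose (h4 : Fintype.card F % 4 = 3) :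
    (jacobsthal F)ᵀ = -jacobsthal F := by
  have hneg : quadraticChar F (-1) = -1 :=
    quadraticChar_neg_one_iff_not_isSquare.mpr (by simp [FiniteField.isSquare_neg_one_iff, h4])
  ext a b
  simp only [Matrix.transpose_apply, jacobsthal, Matrix.of_apply, Matrix.neg_apply]
  rw [← neg_sub, neg_eq_neg_one_mul (a - b), map_mul, hneg, neg_one_mul]

variable (F) in
def paley : Matrix (Unit ⊕ F) (Unit ⊕ F) ℤ :=
  Matrix.fromBlocks 1 (Matrix.of fun _ _ => 1) (Matrix.of fun _ _ => -1) (1 + jacobsthal F)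

theorem paley_apply_eq_one_or_eq_neg_one (i j : Unit ⊕ F) :
    paley F i j = 1 ∨ paley F i j = -1 := by
  rcases i with _ | a <;> rcases j with _ | b
  · simp [paley]
  · simp [paley]
  · simp [paley]
  · by_cases hab : a = b
    · simp [paley, jacobsthal, hab]
    · simpa [paley, jacobsthal, hab] using quadraticChar_dichotomy (sub_ne_zero.mpr hab)

theorem paley_mul_transpose (h4 : Fintype.card F % 4 = 3) :
    paley F * (paley F)ᵀ = ((Fintype.card F + 1 : ℕ) : ℤ) • 1 := by
  have hF := ringChar_ne_two_of_card_mod_four_eq_three h4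
  rw [paley, Matrix.fromBlocks_transpose, Matrix.fromBlocks_multiply, ← Matrix.fromBlocks_one,
    Matrix.fromBlocks_smul, Matrix.fromBlocks_inj]
  refine ⟨?_, ?_, ?_, ?_⟩
  · ext
    simp [Matrix.mul_apply, add_comm]
  · ext _ b
    simp [Matrix.mul_apply, Matrix.one_apply, sum_add_distrib, sum_jacobsthal_row hF b]
  · ext a _
    simp [Matrix.mul_apply, Matrix.one_apply, sum_add_distrib, sum_jacobsthal_row hF a]
  · have hones : (Matrix.of fun (_ : F) (_ : Unit) => (-1 : ℤ)) *
        (Matrix.of fun (_ : F) (_ : Unit) => (-1 : ℤ))ᵀ = Matrix.of fun (_ : F) (_ : F) => 1 := by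
      ext
      simp [Matrix.mul_apply]
    calc _ = (Matrix.of fun _ _ => 1) + (1 + (jacobsthal F + (jacobsthal F)ᵀ)
          + jacobsthal F * (jacobsthal F)ᵀ) := by
          rw [Matrix.transpose_add, Matrix.transpose_one, hones]
          noncomm_ring
      _ = _ := by
          rw [jacobsthal_mul_transpose hF, jacobsthal_transpose h4, add_neg_cancel]
          push_cast
          module

end Paley

theorem exists_isHadamard_of_card_mod_four_eq_three (F : Type*) [Field F] [Fintype F]
    (h4 : Fintype.card F % 4 = 3) :
    ∃ H : Matrix (Fin (Fintype.card F + 1)) (Fin (Fintype.card F + 1)) ℤ, IsHadamard H := by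
  classical
  let e : Unit ⊕ F ≃ Fin (Fintype.card F + 1) := Fintype.equivFinOfCardEq (by simp [add_comm])
  exact ⟨_, isHadamard_reindex e paley_apply_eq_one_or_eq_neg_one (paley_mul_transpose h4)⟩

/-- Paley construction: if q ≡ 3 (mod 4) is a prime power, there is a Hadamard matrix
of order q + 1. -/
theorem hadamard_paley (q : ℕ) (hq : IsPrimePow q) (h4 : q % 4 = 3) :
    ∃ H : Matrix (Fin (q + 1)) (Fin (q + 1)) ℤ, IsHadamard H := by
  obtain ⟨p, n, hp, hn, rfl⟩ := hq
  have : Fact p.Prime := ⟨hp.nat_prime⟩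
  let : Fintype (GaloisField p n) := Fintype.ofFinite _
  have hcard : Fintype.card (GaloisField p n) = p ^ n := by
    rw [← Nat.card_eq_fintype_card, GaloisField.card p n hn.ne']
  rw [← hcard] at h4 ⊢
  exact exists_isHadamard_of_card_mod_four_eq_three _ h4
end

section
/- Let $C \subseteq \{0,1\}^n$ be a self-complementary code with minimum distance $d$ satisfying $n - (n-2d)^2 > 0$. Then $|C| \le \frac{8d(n-d)}{n - (n-2d)^2}$ (the Grey-Rankin bound). -/
/-!
Send a word `c` to its `±1` vector `x_c`, so that `⟨x_c, x_c'⟩ = n - 2 dist(c, c')`.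
The sum of the squared Gram entries `⟨x_c, x_c'⟩²` equals the squared Frobenius norm of
`S = ∑_c x_c x_cᵀ`, whose diagonal entries all equal `|C|`; hence it is at least `n |C|²`.
In each row of the Gram matrix the entries at `c' = c` and at the complement `c' = c̄` are `±n`,
and every other entry lies in `[-(n - 2d), n - 2d]`, because both `c'` and `c̄'` are at
distance at least `d` from `c`. Comparing the two estimates gives
`|C| (n - (n - 2d)²) ≤ 2 (n² - (n - 2d)²) = 8d(n - d)`.
-/

open Finset

theorem sum_sq_sum_sq_le_sum_sq_dotProduct {κ m : Type*} [Fintype m] (s : Finset κ)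
    (v : κ → m → ℝ) :
    ∑ k, (∑ c ∈ s, v c k ^ 2) ^ 2 ≤ ∑ c ∈ s, ∑ c' ∈ s, (v c ⬝ᵥ v c') ^ 2 := by
  have gram_eq_frame : ∑ c ∈ s, ∑ c' ∈ s, (v c ⬝ᵥ v c') ^ 2
      = ∑ k, ∑ l, (∑ c ∈ s, v c k * v c l) ^ 2 := by
    simp only [sq, dotProduct, sum_mul_sum]
    rw [sum_comm]
    simp_rw [sum_comm (s := s) (t := univ)]
    refine sum_congr rfl fun k _ => sum_congr rfl fun l _ => ?_
    rw [sum_comm]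
    exact sum_congr rfl fun _ _ => sum_congr rfl fun _ _ => by ring
  rw [gram_eq_frame]
  refine sum_le_sum fun k _ => ?_
  simpa only [sq] using single_le_sum (f := fun l => (∑ c ∈ s, v c k * v c l) ^ 2)
    (fun l _ => sq_nonneg _) (mem_univ k)

section SignVector

variable {ι : Type*}

def signVec (c : ι → Bool) : ι → ℝ := fun k => if c k then 1 else -1

theorem signVec_sq (c : ι → Bool) (k : ι) : signVec c k ^ 2 = 1 := by
  unfold signVec; split_ifs <;> norm_num

theorem signVec_not (c : ι → Bool) : signVec (fun k => !(c k)) = -signVec c := by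
  ext k; unfold signVec; cases h : c k <;> simp [h]

theorem signVec_dotProduct [Fintype ι] (c c' : ι → Bool) :
    signVec c ⬝ᵥ signVec c' = Fintype.card ι - 2 * hammingDist c c' := by
  have term : ∀ k, signVec c k * signVec c' k = 1 - 2 * if c k ≠ c' k then (1 : ℝ) else 0 := by
    intro k; unfold signVec; cases c k <;> cases c' k <;> norm_num
  simp only [dotProduct, term, sum_sub_distrib, ← mul_sum, sum_boole, hammingDist]
  simp

theorem signVec_dotProduct_self [Fintype ι] (c : ι → Bool) :
    signVec c ⬝ᵥ signVec c = Fintype.card ι := by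
  simp [signVec_dotProduct]

theorem signVec_dotProduct_le [Fintype ι] {c c' : ι → Bool} {d : ℕ}
    (h : d ≤ hammingDist c c') :
    signVec c ⬝ᵥ signVec c' ≤ Fintype.card ι - 2 * d := by
  rw [signVec_dotProduct]
  have : (d : ℝ) ≤ hammingDist c c' := by exact_mod_cast h
  linarith

end SignVector

section SelfComplementaryCode

variable {ι : Type*} [Fintype ι] {C : Finset (ι → Bool)} {d : ℕ}

def IsSelfComplementary (C : Finset (ι → Bool)) : Prop :=
  ∀ c ∈ C, (fun k => !(c k)) ∈ C

theorem sq_signVec_dotProduct_le (hsc : IsSelfComplementary C)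
    (hd : ∀ c₁ ∈ C, ∀ c₂ ∈ C, c₁ ≠ c₂ → d ≤ hammingDist c₁ c₂)
    {c c' : ι → Bool} (hc : c ∈ C) (hc' : c' ∈ C) (hne : c ≠ c')
    (hne_compl : c' ≠ fun k => !(c k)) :
    (signVec c ⬝ᵥ signVec c') ^ 2 ≤ ((Fintype.card ι : ℝ) - 2 * d) ^ 2 := by
  have upper := signVec_dotProduct_le (hd c hc c' hc' hne)
  have lower := signVec_dotProduct_le
    (hd c hc _ (hsc c' hc') fun h => hne_compl (by rw [h]; simp))
  rw [signVec_not, dotProduct_neg] at lower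
  exact sq_le_sq' (by linarith) upper

theorem sum_sq_signVec_dotProduct_le [Nonempty ι] (hsc : IsSelfComplementary C)
    (hd : ∀ c₁ ∈ C, ∀ c₂ ∈ C, c₁ ≠ c₂ → d ≤ hammingDist c₁ c₂) {c : ι → Bool} (hc : c ∈ C) :
    ∑ c' ∈ C, (signVec c ⬝ᵥ signVec c') ^ 2
      ≤ 2 * ((Fintype.card ι : ℝ) ^ 2 - ((Fintype.card ι : ℝ) - 2 * d) ^ 2)
        + C.card * ((Fintype.card ι : ℝ) - 2 * d) ^ 2 := by
  classical
  set n : ℝ := (Fintype.card ι : ℝ)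
  set s : ℝ := n - 2 * d
  have compl_ne : (fun k => !(c k)) ≠ c := fun h =>
    Bool.not_ne_self _ (congrFun h (Classical.arbitrary ι))
  have excess_le : ∑ c' ∈ C, ((signVec c ⬝ᵥ signVec c') ^ 2 - s ^ 2)
      ≤ ∑ c' ∈ {c, fun k => !(c k)}, ((signVec c ⬝ᵥ signVec c') ^ 2 - s ^ 2) := by
    refine sum_le_sum_of_subset_of_nonpos' (insert_subset hc (singleton_subset_iff.2 (hsc c hc)))
      fun c' hc' hc'_pair => ?_
    simp only [mem_insert, mem_singleton, not_or] at hc'_pair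
    exact sub_nonpos.2 (sq_signVec_dotProduct_le hsc hd hc hc' (Ne.symm hc'_pair.1) hc'_pair.2)
  rw [sum_pair compl_ne.symm, signVec_not, dotProduct_neg, neg_sq, signVec_dotProduct_self,
    sum_sub_distrib, sum_const, nsmul_eq_mul] at excess_le
  linarith

end SelfComplementaryCode

/-- The Grey–Rankin bound for self-complementary binary codes. -/
theorem grey_rankin (n d : ℕ) (C : Finset (Fin n → Bool))
    (hsc : ∀ c ∈ C, (fun k => !(c k)) ∈ C)
    (hd : ∀ c₁ ∈ C, ∀ c₂ ∈ C, c₁ ≠ c₂ → d ≤ hammingDist c₁ c₂)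
    (hpos : 0 < (n : ℝ) - ((n : ℝ) - 2 * d) ^ 2) :
    (C.card : ℝ) ≤ 8 * d * ((n : ℝ) - d) / ((n : ℝ) - ((n : ℝ) - 2 * d) ^ 2) := by
  set s : ℝ := (n : ℝ) - 2 * d
  set M : ℝ := (C.card : ℝ)
  have hn : 0 < n := by exact_mod_cast (sq_nonneg s).trans_lt (sub_pos.1 hpos)
  have : Nonempty (Fin n) := ⟨⟨0, hn⟩⟩
  have gram_bound : n * M ^ 2 ≤ M * (2 * ((n : ℝ) ^ 2 - s ^ 2) + M * s ^ 2) :=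
    calc n * M ^ 2 = ∑ k : Fin n, (∑ c ∈ C, signVec c k ^ 2) ^ 2 := by simp [signVec_sq, M]
      _ ≤ ∑ c ∈ C, ∑ c' ∈ C, (signVec c ⬝ᵥ signVec c') ^ 2 :=
        sum_sq_sum_sq_le_sum_sq_dotProduct C _
      _ ≤ ∑ _c ∈ C, (2 * ((n : ℝ) ^ 2 - s ^ 2) + M * s ^ 2) := by
        refine sum_le_sum fun c hc => ?_
        simpa only [Fintype.card_fin] using sum_sq_signVec_dotProduct_le hsc hd hc
      _ = M * (2 * ((n : ℝ) ^ 2 - s ^ 2) + M * s ^ 2) := by rw [sum_const, nsmul_eq_mul]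
  have hn_sq : (n : ℝ) ≤ (n : ℝ) ^ 2 := by
    nlinarith [show (1 : ℝ) ≤ n by exact_mod_cast hn]
  rw [show 8 * (d : ℝ) * (n - d) = 2 * ((n : ℝ) ^ 2 - s ^ 2) by ring, le_div_iff₀ hpos]
  rcases (show 0 ≤ M by positivity).eq_or_lt with hM | hM
  · rw [← hM, zero_mul]; linarith
  · exact le_of_mul_le_mul_left (by linarith) hM
end
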